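/- Let E = EuclideanSpace ℝ (Fin n), ξ ∈ E with ‖ξ‖ = 1, and μ a Borel probability measure on E satisfying the standing integrability assumption whose topological support is not contained in any affine line {p + tξ : t ∈ ℝ} (p ∈ E). Let (β_m) be a sequence in [0, 1) converging to 1 and, for each m, let q_m ∈ E be a minimizer of G_{β_m ξ}. Then q_m/‖q_m‖ → ξ as m → ∞ (with the convention that q_m/‖q_m‖ = 0 if q_m = 0, which occurs for at most finitely many m). (The Euclidean direction statement proved in the remark following Theorem 6.1, recovering Girard–Stupfler's Theorem 2.1 without the non-atomicity assumption.) -/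

import Mathlib

open MeasureTheory Filter Topology

/-- The data-based geometric quantile loss in Euclidean space:
`ρ_u(x,p) = ‖p − x‖ − ⟪u, p − x⟫`. -/
noncomputable def quantileLoss {n : ℕ} (u x p : EuclideanSpace ℝ (Fin n)) : ℝ :=
  ‖p - x‖ - inner ℝ u (p - x)

/-- The topological support of a measure: points all of whose neighbourhoods have
positive measure. -/
def measSupport {α : Type*} [TopologicalSpace α] [MeasurableSpace α]
    (μ : Measure α) : Set α :=
  {x | ∀ U ∈ nhds x, μ U ≠ 0}

/-!
Write `G_u = quantileRisk μ u` and `M = ∫ ‖x‖ dμ`. Each `G_u` lies within `(1 + ‖u‖) M` of the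
loss at the origin `p ↦ ‖p‖ - ⟪u, p⟫`, so comparing `G_{βξ}(q)` with `G_{βξ}(‖q‖ ξ)` for a
minimizer `q` gives `β (‖q‖ - ⟪ξ, q⟫) ≤ 4M`, that is `β ‖q‖ ‖q/‖q‖ - ξ‖² ≤ 8M`. It remains to
see that `‖q_m‖ → ∞`. The limit risk `G_ξ` is continuous and positive, since it vanishes only
when `μ` lives on a line of direction `ξ`, yet it tends to `0` along the ray `t ξ`. As
`G_{β_m ξ} → G_ξ` uniformly on balls, a minimizer of `G_{β_m ξ}` cannot stay in a ball, on which
`G_ξ` is bounded below by a positive constant.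
-/

open Metric
open scoped RealInnerProductSpace

lemma measSupport_subset_of_ae_mem {α : Type*} [TopologicalSpace α] [MeasurableSpace α]
    {μ : Measure α} {S : Set α} (hS : IsClosed S) (h : ∀ᵐ x ∂μ, x ∈ S) :
    measSupport μ ⊆ S := fun x hx => by
  by_contra hxS
  exact hx Sᶜ (hS.isOpen_compl.mem_nhds hxS) (ae_iff.mp h)

lemma abs_integral_sub_integral_le {α : Type*} [MeasurableSpace α] {μ : Measure α}
    {f g h : α → ℝ} (hf : Integrable f μ) (hg : Integrable g μ) (hh : Integrable h μ)
    (hfg : ∀ x, |f x - g x| ≤ h x) :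
    |∫ x, f x ∂μ - ∫ x, g x ∂μ| ≤ ∫ x, h x ∂μ := by
  rw [← integral_sub hf hg]
  exact abs_integral_le_integral_abs.trans (integral_mono (hf.sub hg).abs hh hfg)

lemma tendsto_norm_minimizer_atTop {E ι : Type*} [NormedAddCommGroup E] [ProperSpace E]
    {l : Filter ι} {f : E → ℝ} {g : ι → E → ℝ} {q : ι → E} (hf : Continuous f)
    (hpos : ∀ p, 0 < f p) (hinf : ∀ ε > 0, ∃ p, f p < ε)
    (hg : ∀ R, TendstoUniformlyOn g f l (closedBall 0 R)) (hq : ∀ i p, g i (q i) ≤ g i p) :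
    Tendsto (fun i => ‖q i‖) l atTop := by
  refine tendsto_atTop.2 fun R => ?_
  set R₀ := max R 0
  obtain ⟨p₀, -, hp₀⟩ := (isCompact_closedBall (0 : E) R₀).exists_isMinOn
    ⟨0, mem_closedBall_self (le_max_right _ _)⟩ hf.continuousOn
  obtain ⟨p, hp⟩ := hinf (f p₀ / 2) (half_pos (hpos p₀))
  have hclose := Metric.tendstoUniformlyOn_iff.1 (hg (max R₀ ‖p‖)) (f p₀ / 4)
    (by linarith [hpos p₀])
  filter_upwards [hclose] with i hi
  by_contra! hqi
  have hqR₀ : q i ∈ closedBall 0 R₀ := by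
    rw [mem_closedBall_zero_iff]
    linarith [le_max_left R 0]
  have h₁ := hi (q i) (closedBall_subset_closedBall (le_max_left _ _) hqR₀)
  have h₂ := hi p (by simp)
  have h₃ : f p₀ ≤ f (q i) := hp₀ hqR₀
  rw [Real.dist_eq, abs_lt] at h₁ h₂
  linarith [hq i p]

section InnerProductSpace

variable {F : Type*} [NormedAddCommGroup F] [InnerProductSpace ℝ F]

lemma norm_mul_norm_inv_smul_sub_sq {ξ : F} (hξ : ‖ξ‖ = 1) (q : F) :
    ‖q‖ * ‖‖q‖⁻¹ • q - ξ‖ ^ 2 = 2 * (‖q‖ - ⟪ξ, q⟫) := by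
  rcases eq_or_ne q 0 with rfl | hq
  · simp
  · have hq' : ‖q‖ ≠ 0 := norm_ne_zero_iff.mpr hq
    rw [norm_sub_sq_real, norm_smul, norm_inv, norm_norm, inv_mul_cancel₀ hq',
      real_inner_smul_left, real_inner_comm, hξ]
    field_simp
    ring

lemma tendsto_inv_norm_smul_of_mul_sub_inner_le {ι : Type*} {l : Filter ι} {ξ : F}
    (hξ : ‖ξ‖ = 1) {b : ι → ℝ} {q : ι → F} {C : ℝ} (hb : Tendsto b l (𝓝 1))
    (hq : Tendsto (fun i => ‖q i‖) l atTop)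
    (hC : ∀ᶠ i in l, b i * (‖q i‖ - ⟪ξ, q i⟫) ≤ C) :
    Tendsto (fun i => ‖q i‖⁻¹ • q i) l (𝓝 ξ) := by
  have hbq : Tendsto (fun i => b i * ‖q i‖) l atTop := hb.pos_mul_atTop one_pos hq
  have hsq : Tendsto (fun i => ‖‖q i‖⁻¹ • q i - ξ‖ ^ 2) l (𝓝 0) := by
    refine squeeze_zero' (Eventually.of_forall fun i => sq_nonneg _) ?_
      ((tendsto_const_nhds (x := 2 * C)).div_atTop hbq)
    filter_upwards [hC, hbq.eventually_gt_atTop 0] with i hi hpos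
    rw [le_div_iff₀ hpos]
    calc ‖‖q i‖⁻¹ • q i - ξ‖ ^ 2 * (b i * ‖q i‖)
        = b i * (‖q i‖ * ‖‖q i‖⁻¹ • q i - ξ‖ ^ 2) := by ring
      _ = 2 * (b i * (‖q i‖ - ⟪ξ, q i⟫)) := by rw [norm_mul_norm_inv_smul_sub_sq hξ]; ring
      _ ≤ 2 * C := by linarith
  rw [tendsto_iff_norm_sub_tendsto_zero]
  simpa [Real.sqrt_sq (norm_nonneg _)] using hsq.sqrt

end InnerProductSpace

section QuantileLoss

variable {n : ℕ}

lemma continuous_quantileLoss (u p : EuclideanSpace ℝ (Fin n)) :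
    Continuous fun x => quantileLoss u x p := by
  unfold quantileLoss
  fun_prop

lemma abs_quantileLoss_sub_quantileLoss_le (u x p x' p' : EuclideanSpace ℝ (Fin n)) :
    |quantileLoss u x p - quantileLoss u x' p'| ≤ (1 + ‖u‖) * ‖(p - x) - (p' - x')‖ := by
  have h₁ := abs_norm_sub_norm_le (p - x) (p' - x')
  have h₂ := abs_real_inner_le_norm u ((p - x) - (p' - x'))
  calc |quantileLoss u x p - quantileLoss u x' p'|
      = |(‖p - x‖ - ‖p' - x'‖) - ⟪u, (p - x) - (p' - x')⟫| := by
        rw [inner_sub_right, quantileLoss, quantileLoss]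
        congr 1
        ring
    _ ≤ |‖p - x‖ - ‖p' - x'‖| + |⟪u, (p - x) - (p' - x')⟫| := abs_sub _ _
    _ ≤ (1 + ‖u‖) * ‖(p - x) - (p' - x')‖ := by linarith

lemma abs_quantileLoss_sub_quantileLoss_index_le (u v x p : EuclideanSpace ℝ (Fin n)) :
    |quantileLoss u x p - quantileLoss v x p| ≤ ‖u - v‖ * ‖p - x‖ := by
  have h : quantileLoss u x p - quantileLoss v x p = -⟪u - v, p - x⟫ := by
    rw [quantileLoss, quantileLoss, inner_sub_left]
    ring
  rw [h, abs_neg]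
  exact abs_real_inner_le_norm _ _

lemma abs_quantileLoss_le (u x p : EuclideanSpace ℝ (Fin n)) :
    |quantileLoss u x p| ≤ (1 + ‖u‖) * ‖p - x‖ := by
  simpa [quantileLoss] using abs_quantileLoss_sub_quantileLoss_le u x p 0 0

lemma mul_norm_sub_le_quantileLoss (u x p : EuclideanSpace ℝ (Fin n)) :
    (1 - ‖u‖) * ‖p - x‖ ≤ quantileLoss u x p := by
  have := real_inner_le_norm u (p - x)
  rw [quantileLoss]
  linarith

lemma quantileLoss_nonneg {u : EuclideanSpace ℝ (Fin n)} (hu : ‖u‖ ≤ 1)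
    (x p : EuclideanSpace ℝ (Fin n)) : 0 ≤ quantileLoss u x p :=
  (mul_nonneg (sub_nonneg.2 hu) (norm_nonneg _)).trans (mul_norm_sub_le_quantileLoss u x p)

variable {ξ : EuclideanSpace ℝ (Fin n)}

lemma exists_eq_add_smul_of_quantileLoss_eq_zero {x p : EuclideanSpace ℝ (Fin n)}
    (hξ : ‖ξ‖ = 1) (h : quantileLoss ξ x p = 0) : ∃ t : ℝ, x = p + t • ξ := by
  have heq : ⟪ξ, p - x⟫ = ‖ξ‖ * ‖p - x‖ := by
    rw [quantileLoss] at h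
    rw [hξ, one_mul]
    linarith
  rw [inner_eq_norm_mul_iff_real, hξ, one_smul] at heq
  exact ⟨-‖p - x‖, by rw [neg_smul, heq]; abel⟩

lemma quantileLoss_smul_self (hξ : ‖ξ‖ = 1) (x : EuclideanSpace ℝ (Fin n)) (t : ℝ) :
    quantileLoss ξ x (t • ξ) = ‖t • ξ - x‖ - (t - ⟪ξ, x⟫) := by
  rw [quantileLoss, inner_sub_right, real_inner_smul_right, real_inner_self_eq_norm_sq, hξ]
  ring

lemma quantileLoss_smul_self_le (hξ : ‖ξ‖ = 1) (x : EuclideanSpace ℝ (Fin n)) {t : ℝ}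
    (ht : ⟪ξ, x⟫ < t) : quantileLoss ξ x (t • ξ) ≤ ‖x‖ ^ 2 / (t - ⟪ξ, x⟫) := by
  have hd : 0 < t - ⟪ξ, x⟫ := sub_pos.2 ht
  have hsq : ‖t • ξ - x‖ ^ 2 = (t - ⟪ξ, x⟫) ^ 2 + ‖x‖ ^ 2 - ⟪ξ, x⟫ ^ 2 := by
    rw [norm_sub_sq_real, norm_smul, real_inner_smul_left, hξ, Real.norm_eq_abs, mul_one,
      sq_abs]
    ring
  rw [quantileLoss_smul_self hξ, le_div_iff₀ hd]
  nlinarith [norm_nonneg (t • ξ - x), sq_nonneg ⟪ξ, x⟫]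

lemma tendsto_quantileLoss_smul_self_atTop (hξ : ‖ξ‖ = 1) (x : EuclideanSpace ℝ (Fin n)) :
    Tendsto (fun t : ℝ => quantileLoss ξ x (t • ξ)) atTop (𝓝 0) := by
  have hden : Tendsto (fun t : ℝ => t - ⟪ξ, x⟫) atTop atTop :=
    tendsto_atTop_add_const_right _ _ tendsto_id
  refine squeeze_zero' (Eventually.of_forall fun t => quantileLoss_nonneg hξ.le x _) ?_
    ((tendsto_const_nhds (x := ‖x‖ ^ 2)).div_atTop hden)
  filter_upwards [eventually_gt_atTop ⟪ξ, x⟫] with t ht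
  exact quantileLoss_smul_self_le hξ x ht

end QuantileLoss

section QuantileRisk

variable {n : ℕ}

noncomputable def quantileRisk (μ : Measure (EuclideanSpace ℝ (Fin n)))
    (u p : EuclideanSpace ℝ (Fin n)) : ℝ :=
  ∫ x, quantileLoss u x p ∂μ

variable {μ : Measure (EuclideanSpace ℝ (Fin n))}

lemma integrable_norm_of_integrable_quantileLoss [IsFiniteMeasure μ]
    {u p : EuclideanSpace ℝ (Fin n)} (hu : ‖u‖ < 1)
    (h : Integrable (fun x => quantileLoss u x p) μ) : Integrable (fun x => ‖x‖) μ := by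
  have hc : 0 < 1 - ‖u‖ := sub_pos.2 hu
  refine ((h.const_mul (1 - ‖u‖)⁻¹).add (integrable_const ‖p‖)).mono'
    continuous_norm.aestronglyMeasurable (ae_of_all _ fun x => ?_)
  have h₁ : ‖p - x‖ ≤ (1 - ‖u‖)⁻¹ * quantileLoss u x p :=
    (le_inv_mul_iff₀ hc).2 (mul_norm_sub_le_quantileLoss u x p)
  have h₂ : ‖x‖ ≤ ‖p‖ + ‖p - x‖ := by simpa using norm_sub_le p (p - x)
  rw [norm_norm]
  change ‖x‖ ≤ (1 - ‖u‖)⁻¹ * quantileLoss u x p + ‖p‖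
  linarith

lemma integrable_quantileLoss [IsFiniteMeasure μ] (hX : Integrable (fun x => ‖x‖) μ)
    (u p : EuclideanSpace ℝ (Fin n)) : Integrable (fun x => quantileLoss u x p) μ :=
  (((integrable_const ‖p‖).add hX).const_mul (1 + ‖u‖)).mono'
    (continuous_quantileLoss u p).aestronglyMeasurable
    (ae_of_all _ fun x => (abs_quantileLoss_le u x p).trans
      (mul_le_mul_of_nonneg_left (norm_sub_le p x) (by positivity)))

lemma quantileRisk_pos [IsFiniteMeasure μ] (hX : Integrable (fun x => ‖x‖) μ)
    {ξ p : EuclideanSpace ℝ (Fin n)} (hξ : ‖ξ‖ = 1)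
    (hsupp : ¬ measSupport μ ⊆ {y | ∃ t : ℝ, y = p + t • ξ}) : 0 < quantileRisk μ ξ p := by
  have hnn : 0 ≤ fun x => quantileLoss ξ x p := fun x => quantileLoss_nonneg hξ.le x p
  refine (integral_nonneg hnn).lt_of_ne fun h₀ => hsupp ?_
  have hae := (integral_eq_zero_iff_of_nonneg hnn (integrable_quantileLoss hX ξ p)).1 h₀.symm
  refine (measSupport_subset_of_ae_mem (isClosed_eq (continuous_quantileLoss ξ p)
    continuous_const) hae).trans fun x hx => exists_eq_add_smul_of_quantileLoss_eq_zero hξ hx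

lemma tendsto_quantileRisk_smul_self_atTop (hX : Integrable (fun x => ‖x‖) μ)
    {ξ : EuclideanSpace ℝ (Fin n)} (hξ : ‖ξ‖ = 1) :
    Tendsto (fun t : ℝ => quantileRisk μ ξ (t • ξ)) atTop (𝓝 0) := by
  have h := tendsto_integral_filter_of_dominated_convergence (μ := μ) (l := atTop)
    (F := fun t x => quantileLoss ξ x (t • ξ)) (f := 0) (fun x => 2 * ‖x‖)
    (Eventually.of_forall fun t => (continuous_quantileLoss ξ _).aestronglyMeasurable) ?_
    (hX.const_mul 2) (ae_of_all _ fun x => tendsto_quantileLoss_smul_self_atTop hξ x)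
  · simpa [quantileRisk] using h
  filter_upwards [eventually_ge_atTop 0] with t ht
  refine ae_of_all _ fun x => ?_
  have h₁ : ‖t • ξ‖ = t := by rw [norm_smul, hξ, Real.norm_of_nonneg ht, mul_one]
  have h₂ := norm_sub_le (t • ξ) x
  have h₃ : ⟪ξ, x⟫ ≤ ‖x‖ := by simpa [hξ] using real_inner_le_norm ξ x
  rw [Real.norm_of_nonneg (quantileLoss_nonneg hξ.le x _), quantileLoss_smul_self hξ]
  linarith

variable [IsProbabilityMeasure μ]

lemma abs_quantileRisk_sub_quantileRisk_le (hX : Integrable (fun x => ‖x‖) μ)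
    (u p p' : EuclideanSpace ℝ (Fin n)) :
    |quantileRisk μ u p - quantileRisk μ u p'| ≤ (1 + ‖u‖) * ‖p - p'‖ := by
  have := abs_integral_sub_integral_le (integrable_quantileLoss hX u p)
    (integrable_quantileLoss hX u p') (integrable_const _) fun x =>
      (abs_quantileLoss_sub_quantileLoss_le u x p x p').trans_eq
        (by rw [sub_sub_sub_cancel_right])
  simpa [quantileRisk] using this

lemma lipschitzWith_quantileRisk (hX : Integrable (fun x => ‖x‖) μ)
    (u : EuclideanSpace ℝ (Fin n)) : LipschitzWith (1 + ‖u‖₊) (quantileRisk μ u) :=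
  LipschitzWith.of_dist_le_mul fun p p' => by
    simpa [Real.dist_eq, dist_eq_norm] using abs_quantileRisk_sub_quantileRisk_le hX u p p'

lemma abs_quantileRisk_sub_quantileLoss_zero_le (hX : Integrable (fun x => ‖x‖) μ)
    (u p : EuclideanSpace ℝ (Fin n)) :
    |quantileRisk μ u p - quantileLoss u 0 p| ≤ (1 + ‖u‖) * ∫ x, ‖x‖ ∂μ := by
  have := abs_integral_sub_integral_le (integrable_quantileLoss hX u p) (integrable_const _)
    (hX.const_mul (1 + ‖u‖))
    fun x => (abs_quantileLoss_sub_quantileLoss_le u x p 0 p).trans_eq (by simp)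
  simpa [quantileRisk, integral_const_mul] using this

lemma abs_quantileRisk_sub_quantileRisk_index_le (hX : Integrable (fun x => ‖x‖) μ)
    (u v p : EuclideanSpace ℝ (Fin n)) :
    |quantileRisk μ u p - quantileRisk μ v p| ≤ ‖u - v‖ * (‖p‖ + ∫ x, ‖x‖ ∂μ) := by
  have := abs_integral_sub_integral_le (integrable_quantileLoss hX u p)
    (integrable_quantileLoss hX v p) (((integrable_const ‖p‖).add hX).const_mul ‖u - v‖)
    fun x => (abs_quantileLoss_sub_quantileLoss_index_le u v x p).trans
      (mul_le_mul_of_nonneg_left (norm_sub_le p x) (norm_nonneg _))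
  rw [integral_const_mul, integral_add' (integrable_const _) hX] at this
  simpa [quantileRisk] using this

lemma tendstoUniformlyOn_quantileRisk (hX : Integrable (fun x => ‖x‖) μ) {ι : Type*}
    {l : Filter ι} {u : ι → EuclideanSpace ℝ (Fin n)} {v : EuclideanSpace ℝ (Fin n)}
    (hu : Tendsto u l (𝓝 v)) (R : ℝ) :
    TendstoUniformlyOn (fun i => quantileRisk μ (u i)) (quantileRisk μ v) l (closedBall 0 R) := by
  rw [Metric.tendstoUniformlyOn_iff]
  intro ε hε
  have hsmall : Tendsto (fun i => ‖u i - v‖ * (R + ∫ x, ‖x‖ ∂μ)) l (𝓝 0) := by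
    simpa using (tendsto_iff_norm_sub_tendsto_zero.1 hu).mul_const (R + ∫ x, ‖x‖ ∂μ)
  filter_upwards [hsmall.eventually_lt_const hε] with i hi p hp
  rw [dist_comm, Real.dist_eq]
  calc |quantileRisk μ (u i) p - quantileRisk μ v p|
      ≤ ‖u i - v‖ * (‖p‖ + ∫ x, ‖x‖ ∂μ) :=
        abs_quantileRisk_sub_quantileRisk_index_le hX _ _ _
    _ ≤ ‖u i - v‖ * (R + ∫ x, ‖x‖ ∂μ) := by
        gcongr
        simpa using hp
    _ < ε := hi

lemma mul_norm_sub_inner_le_of_quantileRisk_le (hX : Integrable (fun x => ‖x‖) μ)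
    {ξ q : EuclideanSpace ℝ (Fin n)} (hξ : ‖ξ‖ = 1) {b : ℝ} (hb : 0 ≤ b)
    (hq : quantileRisk μ (b • ξ) q ≤ quantileRisk μ (b • ξ) (‖q‖ • ξ)) :
    b * (‖q‖ - ⟪ξ, q⟫) ≤ 2 * (1 + b) * ∫ x, ‖x‖ ∂μ := by
  have hnorm : ‖b • ξ‖ = b := by rw [norm_smul, hξ, Real.norm_of_nonneg hb, mul_one]
  have h₁ := abs_quantileRisk_sub_quantileLoss_zero_le hX (b • ξ) q
  have h₂ := abs_quantileRisk_sub_quantileLoss_zero_le hX (b • ξ) (‖q‖ • ξ)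
  have h₃ : quantileLoss (b • ξ) 0 q = ‖q‖ - b * ⟪ξ, q⟫ := by
    simp [quantileLoss, real_inner_smul_left]
  have h₄ : quantileLoss (b • ξ) 0 (‖q‖ • ξ) = ‖q‖ - b * ‖q‖ := by
    simp [quantileLoss, real_inner_smul_left, real_inner_smul_right, hξ, norm_smul, mul_comm]
  rw [hnorm, abs_le] at h₁ h₂
  linarith [h₁.1, h₂.2]

end QuantileRisk

/-- The Euclidean direction statement from the remark after Theorem 6.1 (recovering
Girard–Stupfler without non-atomicity): along `β_m → 1⁻`, `q_m/‖q_m‖ → ξ`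
(with the convention `q_m/‖q_m‖ = 0` when `q_m = 0`, built into `‖q_m‖⁻¹ • q_m`). -/
theorem extreme_quantiles_normalized_tendsto_direction
    {n : ℕ} (μ : Measure (EuclideanSpace ℝ (Fin n))) [IsProbabilityMeasure μ]
    (hμint : ∃ (u₀ p₀ : EuclideanSpace ℝ (Fin n)), ‖u₀‖ < 1 ∧
      Integrable (fun x => quantileLoss u₀ x p₀) μ)
    (ξ : EuclideanSpace ℝ (Fin n)) (hξ : ‖ξ‖ = 1)
    (hsupp : ¬ ∃ p : EuclideanSpace ℝ (Fin n),
      measSupport μ ⊆ {y | ∃ t : ℝ, y = p + t • ξ})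
    (β : ℕ → ℝ) (hβ : ∀ m, β m ∈ Set.Ico (0 : ℝ) 1)
    (hβlim : Tendsto β atTop (nhds 1))
    (q : ℕ → EuclideanSpace ℝ (Fin n))
    (hq : ∀ m, ∀ p, ∫ x, quantileLoss (β m • ξ) x (q m) ∂μ
        ≤ ∫ x, quantileLoss (β m • ξ) x p ∂μ) :
    Tendsto (fun m => ‖q m‖⁻¹ • q m) atTop (nhds ξ) := by
  obtain ⟨u₀, p₀, hu₀, hint⟩ := hμint
  have hX : Integrable (fun x => ‖x‖) μ := integrable_norm_of_integrable_quantileLoss hu₀ hint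
  have hβξ : Tendsto (fun m => β m • ξ) atTop (𝓝 ξ) := by simpa using hβlim.smul_const ξ
  have hinf : ∀ ε > 0, ∃ p, quantileRisk μ ξ p < ε := fun ε hε =>
    let ⟨t, ht⟩ := ((tendsto_quantileRisk_smul_self_atTop hX hξ).eventually_lt_const hε).exists
    ⟨t • ξ, ht⟩
  have hescape : Tendsto (fun m => ‖q m‖) atTop atTop :=
    tendsto_norm_minimizer_atTop (lipschitzWith_quantileRisk hX ξ).continuous
      (fun p => quantileRisk_pos hX hξ fun h => hsupp ⟨p, h⟩) hinf
      (tendstoUniformlyOn_quantileRisk hX hβξ) hq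
  refine tendsto_inv_norm_smul_of_mul_sub_inner_le hξ hβlim hescape
    (C := 4 * ∫ x, ‖x‖ ∂μ) (Eventually.of_forall fun m => ?_)
  have hM : 0 ≤ ∫ x, ‖x‖ ∂μ := integral_nonneg fun x => norm_nonneg x
  have := mul_norm_sub_inner_le_of_quantileRisk_le hX hξ (hβ m).1 (hq m _)
  nlinarith [(hβ m).2]
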